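/- Narrowing only extends the type substitution: if narrow(v, t, ρ, σ) = ⟨r, ρ', σ'⟩ (with r a value or stuck), then σ' extends σ, i.e., σ' = σ[α₁ ↦ t₁]…[αₙ ↦ tₙ] for some (possibly empty) list of fresh bindings; in particular dom(σ) ⊆ dom(σ') and σ' agrees with σ on dom(σ). -/

import Mathlib

/-- Types: t ::= Int | Bool | t × t | Tree t | Fun | α (type hole). -/
inductive Ty : Type where
  | int : Ty
  | bool : Ty
  | fn : Ty
  | prod (t₁ t₂ : Ty) : Ty
  | tree (t : Ty) : Ty
  | hole (α : ℕ) : Ty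
deriving DecidableEq

/-- A type substitution: a (partial) map from type holes to types. -/
abbrev TSub := ℕ → Option Ty

/-- Homomorphic application of a type substitution. -/
def Ty.subst (θ : TSub) : Ty → Ty
  | .int => .int
  | .bool => .bool
  | .fn => .fn
  | .prod t₁ t₂ => .prod (t₁.subst θ) (t₂.subst θ)
  | .tree t => .tree (t.subst θ)
  | .hole α => (θ α).getD (.hole α)

/-- s ∼ t : some substitution maps both to the same type. -/
def Compatible (s t : Ty) : Prop := ∃ θ : TSub, s.subst θ = t.subst θ

/-- s ⊑ t : some substitution maps t to s. -/
def Refines (s t : Ty) : Prop := ∃ θ : TSub, s = t.subst θ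

/-- Ground types contain no type holes. -/
def Ty.Ground : Ty → Prop
  | .int => True
  | .bool => True
  | .fn => True
  | .prod t₁ t₂ => t₁.Ground ∧ t₂.Ground
  | .tree t => t.Ground
  | .hole _ => False

/-- The set of type holes occurring in a type. -/
def Ty.holes : Ty → Set ℕ
  | .int => ∅
  | .bool => ∅
  | .fn => ∅
  | .prod t₁ t₂ => t₁.holes ∪ t₂.holes
  | .tree t => t.holes
  | .hole α => {α}

mutual
/-- Expressions of the calculus (with holes embedded via values). -/
inductive Expr : Type where
  | var (x : ℕ) : Expr
  | val (v : Val) : Expr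
  | plus (e₁ e₂ : Expr) : Expr
  | ite (e₁ e₂ e₃ : Expr) : Expr
  | app (e₁ e₂ : Expr) : Expr
  | pair (e₁ e₂ : Expr) : Expr
  | node (t : Ty) (e₁ e₂ e₃ : Expr) : Expr

/-- Values: n | b | λx.e | (v,v) | Leaf t | Node t v v v | ν[α] (hole). -/
inductive Val : Type where
  | int (n : ℤ) : Val
  | bool (b : Bool) : Val
  | lam (x : ℕ) (e : Expr) : Val
  | pair (v₁ v₂ : Val) : Val
  | leaf (t : Ty) : Val
  | node (t : Ty) (v₁ v₂ v₃ : Val) : Val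
  | hole (ν α : ℕ) : Val
end

/-- The dynamic type of a value. -/
def typeof : Val → Ty
  | .int _ => .int
  | .bool _ => .bool
  | .lam _ _ => .fn
  | .pair v₁ v₂ => .prod (typeof v₁) (typeof v₂)
  | .leaf t => .tree t
  | .node t _ _ _ => .tree t
  | .hole _ α => .hole α

/-- A value substitution: a (partial) map from value holes to values. -/
abbrev VSubst := ℕ → Option Val

/-- The non-deterministic generation procedure gen(t, σ), as a relation. -/
inductive Gen (σ : TSub) : Ty → Val → Prop where
  | int (n : ℤ) : Gen σ .int (.int n)
  | bool (b : Bool) : Gen σ .bool (.bool b)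
  | prod {t₁ t₂ v₁ v₂} : Gen σ t₁ v₁ → Gen σ t₂ v₂ →
      Gen σ (.prod t₁ t₂) (.pair v₁ v₂)
  | leaf (t : Ty) : Gen σ (.tree t) (.leaf t)
  | node {t v₁ v₂ v₃} : Gen σ t v₁ → Gen σ (.tree t) v₂ → Gen σ (.tree t) v₃ →
      Gen σ (.tree t) (.node t v₁ v₂ v₃)
  | fn (x ν α : ℕ) : Gen σ .fn (.lam x (.val (.hole ν α)))
  | holeBound {α t v} : σ α = some t → Gen σ t v → Gen σ (.hole α) v
  | holeFree {α} (ν : ℕ) : σ α = none → Gen σ (.hole α) (.hole ν α)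

/-- σ' extends σ: σ' preserves all bindings of σ. -/
def Extends (σ σ' : TSub) : Prop := ∀ α t, σ α = some t → σ' α = some t

/-- unify(C, σ) = σ' : σ' extends σ and equates every constraint in C. -/
def Unify (C : List (Ty × Ty)) (σ σ' : TSub) : Prop :=
  Extends σ σ' ∧ ∀ p ∈ C, Ty.subst σ' p.1 = Ty.subst σ' p.2

/-- Result of narrowing: a value, or the stuck state. -/
inductive Res : Type where
  | ok (v : Val) : Res
  | stuck : Res

/-- The narrow procedure, as an inductive relation
    narrow(v, t, ρ, σ) = ⟨r, ρ', σ'⟩. -/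
inductive Narrow : Val → Ty → VSubst → TSub → Res → VSubst → TSub → Prop where
  | int {n ρ σ} : Narrow (.int n) .int ρ σ (.ok (.int n)) ρ σ
  | bool {b ρ σ} : Narrow (.bool b) .bool ρ σ (.ok (.bool b)) ρ σ
  | lam {x e ρ σ} : Narrow (.lam x e) .fn ρ σ (.ok (.lam x e)) ρ σ
  | pair {v₁ v₂ t₁ t₂ ρ σ σ' σ''} :
      Unify [(typeof v₁, t₁)] σ σ' → Unify [(typeof v₂, t₂)] σ' σ'' →
      Narrow (.pair v₁ v₂) (.prod t₁ t₂) ρ σ (.ok (.pair v₁ v₂)) ρ σ''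
  | leaf {t₁ t₂ ρ σ σ'} : Unify [(t₁, t₂)] σ σ' →
      Narrow (.leaf t₁) (.tree t₂) ρ σ (.ok (.leaf t₁)) ρ σ'
  | node {t₁ t₂ v₁ v₂ v₃ ρ σ σ'} : Unify [(t₁, t₂)] σ σ' →
      Narrow (.node t₁ v₁ v₂ v₃) (.tree t₂) ρ σ (.ok (.node t₁ v₁ v₂ v₃)) ρ σ'
  | holeBound {ν α t v ρ σ σ'} : ρ ν = some v →
      Unify [(.hole α, t), (.hole α, typeof v)] σ σ' →
      Narrow (.hole ν α) t ρ σ (.ok v) ρ σ'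
  | holeBoundStuck {ν α t v ρ σ} : ρ ν = some v →
      (¬ ∃ σ', Unify [(.hole α, t), (.hole α, typeof v)] σ σ') →
      Narrow (.hole ν α) t ρ σ .stuck ρ σ
  | holeFree {ν α t v ρ σ σ'} : ρ ν = none →
      Unify [(.hole α, t)] σ σ' → Gen σ' t v →
      Narrow (.hole ν α) t ρ σ (.ok v)
        (fun m => if m = ν then some v else ρ m) σ'
  | mismatch {v t ρ σ} : Narrow v t ρ σ .stuck ρ σ

theorem Extends.refl (σ : TSub) : Extends σ σ := fun _ _ h => h

theorem Extends.trans {σ₁ σ₂ σ₃ : TSub} (h₁₂ : Extends σ₁ σ₂) (h₂₃ : Extends σ₂ σ₃) :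
    Extends σ₁ σ₃ :=
  fun α t h => h₂₃ α t (h₁₂ α t h)

theorem Extends.apply_eq_of_apply_eq_some {σ σ' : TSub} (hσ : Extends σ σ') {α : ℕ} {t : Ty}
    (ht : σ α = some t) : σ' α = σ α := by
  rw [ht, hσ α t ht]

theorem Unify.extends {C : List (Ty × Ty)} {σ σ' : TSub} (h : Unify C σ σ') : Extends σ σ' :=
  h.1

theorem Narrow.extends {v : Val} {t : Ty} {ρ ρ' : VSubst} {σ σ' : TSub} {r : Res}
    (h : Narrow v t ρ σ r ρ' σ') : Extends σ σ' := by
  cases h with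
  | pair h₁ h₂ => exact h₁.extends.trans h₂.extends
  | leaf hu | node hu | holeBound _ hu | holeFree _ hu _ => exact hu.extends
  | int | bool | lam | holeBoundStuck | mismatch => exact Extends.refl σ

/-- Narrowing only extends the type substitution: whatever
the result (a value or stuck), σ' extends σ. -/
theorem narrow_extends_tsub (v : Val) (t : Ty) (ρ ρ' : VSubst)
    (σ σ' : TSub) (r : Res)
    (h : Narrow v t ρ σ r ρ' σ') :
    Extends σ σ' ∧ (∀ α t', σ α = some t' → σ' α = σ α) :=
  ⟨h.extends, fun _ _ ht => h.extends.apply_eq_of_apply_eq_some ht⟩
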